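/- arXiv:1604.00602 — 2 statements merged into one kernel-verified Lean document; each statement's English description precedes it below -/
import Mathlib

section
/- Let T > 0, let X ⊆ ℝⁿ be a compact set, let X_T ⊆ X be a target set, and let F : ℝ × ℝⁿ → ℝⁿ be a continuous vector field (the closed-loop dynamics f_φ(t,x) + g_φ(t,x)u(t,x)). Suppose v : ℝ × ℝⁿ → ℝ is continuously differentiable and satisfies: (i) ∂v/∂t(t,y) + ⟨∇ₓv(t,y), F(t,y)⟩ ≤ 0 for all (t,y) ∈ [0,T] × X; (ii) v(t,y) ≥ 0 for all (t,y) ∈ [0,T] × X; and (iii) v(T,y) ≥ α for all y ∈ X_T, where α > 0. Then for every differentiable trajectory x : [0,T] → ℝⁿ with x(t) ∈ X for all t ∈ [0,T], x'(t) = F(t, x(t)) for all t ∈ [0,T], and x(T) ∈ X_T, one has v(t_s, x(t_s)) ≥ α for every t_s ∈ [0,T]. In particular v(t,·) ≥ α at every point of the basin of stability (the set of time-state pairs from which the dynamics drive the state into X_T at time T while remaining in X). -/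
open Set

section AlongTrajectory

variable {E : Type*} [NormedAddCommGroup E] [NormedSpace ℝ E]

theorem hasDerivAt_comp_prodMk {G : Type*} [NormedAddCommGroup G] [NormedSpace ℝ G]
    {v : ℝ × E → G} {x : ℝ → E} {x' : E} {t : ℝ}
    (hv : DifferentiableAt ℝ v (t, x t)) (hx : HasDerivAt x x' t) :
    HasDerivAt (fun s ↦ v (s, x s)) (fderiv ℝ v (t, x t) (1, x')) t :=
  hv.hasFDerivAt.comp_hasDerivAt t ((hasDerivAt_id t).prodMk hx)

theorem antitoneOn_comp_of_fderiv_dir_nonpos {v : ℝ × E → ℝ} (hv : Differentiable ℝ v)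
    {F : ℝ × E → E} {S : Set E} {x : ℝ → E} {a b : ℝ}
    (hdecr : ∀ t ∈ Icc a b, ∀ y ∈ S, fderiv ℝ v (t, y) (1, F (t, y)) ≤ 0)
    (hxS : ∀ t ∈ Icc a b, x t ∈ S)
    (hdyn : ∀ t ∈ Icc a b, HasDerivAt x (F (t, x t)) t) :
    AntitoneOn (fun t ↦ v (t, x t)) (Icc a b) := by
  have hderiv : ∀ t ∈ Icc a b,
      HasDerivAt (fun s ↦ v (s, x s)) (fderiv ℝ v (t, x t) (1, F (t, x t))) t :=
    fun t ht ↦ hasDerivAt_comp_prodMk (hv _) (hdyn t ht)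
  refine antitoneOn_of_deriv_nonpos (convex_Icc a b)
    (fun t ht ↦ (hderiv t ht).continuousAt.continuousWithinAt)
    (fun t ht ↦ (hderiv t (interior_subset ht)).differentiableAt.differentiableWithinAt)
    fun t ht ↦ ?_
  have ht' : t ∈ Icc a b := interior_subset ht
  rw [(hderiv t ht').deriv]
  exact hdecr t ht' (x t) (hxS t ht')

end AlongTrajectory

theorem value_ge_alpha_on_basin_of_stability_general
    {n : ℕ} (T : ℝ)
    (X : Set (Fin n → ℝ))
    (XT : Set (Fin n → ℝ))
    (F : ℝ × (Fin n → ℝ) → (Fin n → ℝ))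
    (v : ℝ × (Fin n → ℝ) → ℝ) (hv : ContDiff ℝ 1 v)
    (α : ℝ)
    (hdecr : ∀ t ∈ Icc (0 : ℝ) T, ∀ y ∈ X, fderiv ℝ v (t, y) (1, F (t, y)) ≤ 0)
    (hterm : ∀ y ∈ XT, α ≤ v (T, y))
    (x : ℝ → (Fin n → ℝ))
    (hxX : ∀ t ∈ Icc (0 : ℝ) T, x t ∈ X)
    (hdyn : ∀ t ∈ Icc (0 : ℝ) T, HasDerivAt x (F (t, x t)) t)
    (hxT : x T ∈ XT) :
    ∀ ts ∈ Icc (0 : ℝ) T, α ≤ v (ts, x ts) := by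
  intro ts hts
  have hanti := antitoneOn_comp_of_fderiv_dir_nonpos (hv.differentiable one_ne_zero)
    hdecr hxX hdyn
  calc α ≤ v (T, x T) := hterm _ hxT
    _ ≤ v (ts, x ts) := hanti hts ⟨hts.1.trans hts.2, le_rfl⟩ hts.2

/-- **Lemma 1 (paper):** If `v` is a feasible point of the optimization problem (D),
i.e. `v` is `C¹`, satisfies the decrease condition
`∂v/∂t(t,y) + ⟨∇ₓv(t,y), F(t,y)⟩ ≤ 0` on `[0,T] × X` (expressed as the total
derivative of `v` in the direction `(1, F(t,y))` being nonpositive), is nonnegative on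
`[0,T] × X`, and satisfies `v(T,·) ≥ α` on the target set `X_T`, then along every
trajectory of `ẋ = F(t,x)` that remains in `X` and reaches `X_T` at time `T` we have
`v(t_s, x(t_s)) ≥ α` for all `t_s ∈ [0,T]`.  In particular `v(t,·) ≥ α` on the basin
of stability. -/
theorem value_ge_alpha_on_basin_of_stability
    {n : ℕ} (T : ℝ) (hT : 0 < T)
    (X : Set (Fin n → ℝ)) (hXcompact : IsCompact X)
    (XT : Set (Fin n → ℝ)) (hXT : XT ⊆ X)
    (F : ℝ × (Fin n → ℝ) → (Fin n → ℝ)) (hF : Continuous F)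
    (v : ℝ × (Fin n → ℝ) → ℝ) (hv : ContDiff ℝ 1 v)
    (α : ℝ) (hα : 0 < α)
    (hdecr : ∀ t ∈ Icc (0 : ℝ) T, ∀ y ∈ X, fderiv ℝ v (t, y) (1, F (t, y)) ≤ 0)
    (hnonneg : ∀ t ∈ Icc (0 : ℝ) T, ∀ y ∈ X, 0 ≤ v (t, y))
    (hterm : ∀ y ∈ XT, α ≤ v (T, y))
    (x : ℝ → (Fin n → ℝ))
    (hxX : ∀ t ∈ Icc (0 : ℝ) T, x t ∈ X)
    (hdyn : ∀ t ∈ Icc (0 : ℝ) T, HasDerivAt x (F (t, x t)) t)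
    (hxT : x T ∈ XT) :
    ∀ ts ∈ Icc (0 : ℝ) T, α ≤ v (ts, x ts) :=
  value_ge_alpha_on_basin_of_stability_general T X XT F v hv α hdecr hterm x hxX hdyn hxT
end

section
/- Let T > 0, let X ⊆ ℝⁿ be compact, let X_T ⊆ X, let α > 0, and let F : ℝ × ℝⁿ → ℝⁿ be continuous. Suppose v : ℝ × ℝⁿ → ℝ is continuously differentiable with ∂v/∂t(t,y) + ⟨∇ₓv(t,y), F(t,y)⟩ ≤ 0 for all (t,y) ∈ [0,T] × X and v(T,y) ≥ α for all y ∈ X_T. Fix t₀ ∈ [0,T] and x₀ ∈ X with v(t₀, x₀) < α. Then there is no differentiable trajectory x : [t₀, T] → ℝⁿ with x(t₀) = x₀, x(t) ∈ X for all t ∈ [t₀,T], x'(t) = F(t, x(t)) for all t ∈ [t₀,T], and x(T) ∈ X_T. Equivalently, for each t ∈ [0,T], the time-t slice of the basin of stability is contained in the superlevel set {y ∈ X : v(t,y) ≥ α}, so the α-superlevel sets of v form an outer approximation of the basin of stability. -/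
open Set

theorem antitoneOn_comp_of_fderiv_apply_nonpos {E : Type*} [NormedAddCommGroup E]
    [NormedSpace ℝ E] {D : Set ℝ} (hD : Convex ℝ D) {v : E → ℝ} {γ γ' : ℝ → E}
    (hv : ∀ t ∈ D, DifferentiableAt ℝ v (γ t)) (hγ : ∀ t ∈ D, HasDerivAt γ (γ' t) t)
    (hdecr : ∀ t ∈ D, fderiv ℝ v (γ t) (γ' t) ≤ 0) :
    AntitoneOn (v ∘ γ) D := by
  have hcomp : ∀ t ∈ D, HasDerivAt (v ∘ γ) (fderiv ℝ v (γ t) (γ' t)) t := fun t ht =>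
    (hv t ht).hasFDerivAt.comp_hasDerivAt t (hγ t ht)
  exact antitoneOn_of_hasDerivWithinAt_nonpos hD
    (fun t ht => (hcomp t ht).continuousAt.continuousWithinAt)
    (fun t ht => (hcomp t (interior_subset ht)).hasDerivWithinAt)
    (fun t ht => hdecr t (interior_subset ht))

theorem sublevel_point_not_in_basin_of_stability_general
    {n : ℕ} (T : ℝ)
    (X : Set (Fin n → ℝ))
    (XT : Set (Fin n → ℝ))
    (α : ℝ)
    (F : ℝ × (Fin n → ℝ) → (Fin n → ℝ))
    (v : ℝ × (Fin n → ℝ) → ℝ) (hv : ContDiff ℝ 1 v)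
    (hdecr : ∀ t ∈ Icc (0 : ℝ) T, ∀ y ∈ X, fderiv ℝ v (t, y) (1, F (t, y)) ≤ 0)
    (hterm : ∀ y ∈ XT, α ≤ v (T, y))
    (t₀ : ℝ) (ht₀ : t₀ ∈ Icc (0 : ℝ) T)
    (x₀ : Fin n → ℝ)
    (hval : v (t₀, x₀) < α) :
    ¬ ∃ x : ℝ → (Fin n → ℝ),
        x t₀ = x₀ ∧
        (∀ t ∈ Icc t₀ T, x t ∈ X) ∧
        (∀ t ∈ Icc t₀ T, HasDerivAt x (F (t, x t)) t) ∧
        x T ∈ XT := by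
  rintro ⟨x, rfl, hxX, hxderiv, hxT⟩
  have hanti : AntitoneOn (fun t => v (t, x t)) (Icc t₀ T) :=
    antitoneOn_comp_of_fderiv_apply_nonpos (γ' := fun t => (1, F (t, x t))) (convex_Icc t₀ T)
      (fun t _ => hv.differentiable one_ne_zero _)
      (fun t ht => (hasDerivAt_id t).prodMk (hxderiv t ht))
      (fun t ht => hdecr t ⟨ht₀.1.trans ht.1, ht.2⟩ _ (hxX t ht))
  have hmono : v (T, x T) ≤ v (t₀, x t₀) :=
    hanti (left_mem_Icc.2 ht₀.2) (right_mem_Icc.2 ht₀.2) ht₀.2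
  linarith [hterm _ hxT]

/-- **Contrapositive form of Lemma 1 (outer approximation of the BOS):** if `v` is
`C¹`, satisfies the decrease condition
`∂v/∂t(t,y) + ⟨∇ₓv(t,y), F(t,y)⟩ ≤ 0` on `[0,T] × X` (expressed via the total
derivative of `v` in the direction `(1, F(t,y))`) and `v(T,·) ≥ α` on `X_T`, then from
any point `(t₀, x₀) ∈ [0,T] × X` with `v(t₀,x₀) < α` there is no trajectory of
`ẋ = F(t,x)` on `[t₀,T]` that starts at `x₀`, remains in `X`, and reaches `X_T`
at time `T`.  Hence the time-`t` slice of the basin of stability is contained in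
`{y ∈ X : v(t,y) ≥ α}`. -/
theorem sublevel_point_not_in_basin_of_stability
    {n : ℕ} (T : ℝ) (hT : 0 < T)
    (X : Set (Fin n → ℝ)) (hXcompact : IsCompact X)
    (XT : Set (Fin n → ℝ)) (hXT : XT ⊆ X)
    (α : ℝ) (hα : 0 < α)
    (F : ℝ × (Fin n → ℝ) → (Fin n → ℝ)) (hF : Continuous F)
    (v : ℝ × (Fin n → ℝ) → ℝ) (hv : ContDiff ℝ 1 v)
    (hdecr : ∀ t ∈ Icc (0 : ℝ) T, ∀ y ∈ X, fderiv ℝ v (t, y) (1, F (t, y)) ≤ 0)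
    (hterm : ∀ y ∈ XT, α ≤ v (T, y))
    (t₀ : ℝ) (ht₀ : t₀ ∈ Icc (0 : ℝ) T)
    (x₀ : Fin n → ℝ) (hx₀ : x₀ ∈ X)
    (hval : v (t₀, x₀) < α) :
    ¬ ∃ x : ℝ → (Fin n → ℝ),
        x t₀ = x₀ ∧
        (∀ t ∈ Icc t₀ T, x t ∈ X) ∧
        (∀ t ∈ Icc t₀ T, HasDerivAt x (F (t, x t)) t) ∧
        x T ∈ XT :=
  sublevel_point_not_in_basin_of_stability_general T X XT α F v hv hdecr hterm t₀ ht₀ x₀ hval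
end
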